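/- In any proper pin sequence p_1, …, p_m, for each i with 3 ≤ i ≤ m−1, the pin p_{i+1} does not slice rect(p_1, …, p_{i−1}); it only slices rect(p_1,…,p_i). -/
import Mathlib


/-- The four possible directions of a pin. -/
inductive PinDir | up | down | left | right
deriving DecidableEq

/-- The opposite of a direction. -/
def PinDir.opp : PinDir → PinDir
  | .up => .down
  | .down => .up
  | .left => .right
  | .right => .left

/-- `q`'s x-coordinate lies strictly inside the x-extent of
`rect(p 0, …, p (i-1))`. -/
def inHullX (p : ℕ → ℝ × ℝ) (i : ℕ) (q : ℝ × ℝ) : Prop :=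
  (∃ j < i, (p j).1 < q.1) ∧ (∃ j < i, q.1 < (p j).1)

/-- `q`'s y-coordinate lies strictly inside the y-extent of
`rect(p 0, …, p (i-1))`. -/
def inHullY (p : ℕ → ℝ × ℝ) (i : ℕ) (q : ℝ × ℝ) : Prop :=
  (∃ j < i, (p j).2 < q.2) ∧ (∃ j < i, q.2 < (p j).2)

def aboveAll (p : ℕ → ℝ × ℝ) (i : ℕ) (q : ℝ × ℝ) : Prop := ∀ j < i, (p j).2 < q.2
def belowAll (p : ℕ → ℝ × ℝ) (i : ℕ) (q : ℝ × ℝ) : Prop := ∀ j < i, q.2 < (p j).2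
def rightOfAll (p : ℕ → ℝ × ℝ) (i : ℕ) (q : ℝ × ℝ) : Prop := ∀ j < i, (p j).1 < q.1
def leftOfAll (p : ℕ → ℝ × ℝ) (i : ℕ) (q : ℝ × ℝ) : Prop := ∀ j < i, q.1 < (p j).1

/-- `q` slices the rectangular hull `rect(p 0, …, p (i-1))`: its x-coordinate is
strictly inside the hull's x-range and its y-coordinate outside the y-range,
or vice versa. -/
def slicesHull (p : ℕ → ℝ × ℝ) (i : ℕ) (q : ℝ × ℝ) : Prop :=
  (inHullX p i q ∧ (aboveAll p i q ∨ belowAll p i q)) ∨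
  (inHullY p i q ∧ (rightOfAll p i q ∨ leftOfAll p i q))

/-- The pin `p i` has direction `d` relative to `rect(p 0, …, p (i-1))`. -/
def hasDir (p : ℕ → ℝ × ℝ) (i : ℕ) : PinDir → Prop
  | .up => inHullX p i (p i) ∧ aboveAll p i (p i)
  | .down => inHullX p i (p i) ∧ belowAll p i (p i)
  | .right => inHullY p i (p i) ∧ rightOfAll p i (p i)
  | .left => inHullY p i (p i) ∧ leftOfAll p i (p i)

/-- Separation condition: `p (i+1)` lies horizontally or vertically between
`rect(p 0, …, p (i-1))` and `p i`. -/
def separatesNext (p : ℕ → ℝ × ℝ) (i : ℕ) : Prop :=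
  (∀ j < i, (p j).1 < (p (i+1)).1 ∧ (p (i+1)).1 < (p i).1) ∨
  (∀ j < i, (p i).1 < (p (i+1)).1 ∧ (p (i+1)).1 < (p j).1) ∨
  (∀ j < i, (p j).2 < (p (i+1)).2 ∧ (p (i+1)).2 < (p i).2) ∨
  (∀ j < i, (p i).2 < (p (i+1)).2 ∧ (p (i+1)).2 < (p j).2)

/-- Maximality condition: `p i` is extremal in its direction among the points of
the ambient set `S` slicing `rect(p 0, …, p (i-1))`. -/
def maximalAt (S : Set (ℝ × ℝ)) (p : ℕ → ℝ × ℝ) (i : ℕ) : Prop :=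
  (hasDir p i .up → ∀ q ∈ S, slicesHull p i q → q.2 ≤ (p i).2) ∧
  (hasDir p i .down → ∀ q ∈ S, slicesHull p i q → (p i).2 ≤ q.2) ∧
  (hasDir p i .right → ∀ q ∈ S, slicesHull p i q → q.1 ≤ (p i).1) ∧
  (hasDir p i .left → ∀ q ∈ S, slicesHull p i q → (p i).1 ≤ q.1)

/-- `p 0, …, p (m-1)` is a proper pin sequence among the points of `S`
(the plot of a permutation, so distinct x- and y-coordinates): each `p i`
(`i ≥ 2`) slices the hull of its predecessors, is maximal in its direction,
and each pin separates its predecessor from the earlier hull. -/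
def ProperPinSeq (S : Set (ℝ × ℝ)) (p : ℕ → ℝ × ℝ) (m : ℕ) : Prop :=
  (∀ i < m, p i ∈ S) ∧
  (∀ q ∈ S, ∀ r ∈ S, q ≠ r → q.1 ≠ r.1 ∧ q.2 ≠ r.2) ∧
  (∀ i < m, ∀ j < m, i ≠ j → p i ≠ p j) ∧
  (∀ i, 2 ≤ i → i < m → slicesHull p i (p i)) ∧
  (∀ i, 2 ≤ i → i < m → maximalAt S p i) ∧
  (∀ i, 2 ≤ i → i + 1 < m → separatesNext p i)

/-- In a proper pin sequence, `p (i+1)` does not slice the rectangular hull of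
`p 0, …, p (i-1)`; it only slices `rect(p 0, …, p i)`. -/
theorem stmt13 (S : Set (ℝ × ℝ)) (p : ℕ → ℝ × ℝ) (m : ℕ)
    (hp : ProperPinSeq S p m) :
    ∀ i, 2 ≤ i → i + 1 < m → ¬ slicesHull p i (p (i + 1)) := by
  obtain ⟨-, -, -, hslice, -, hsep⟩ := hp
  intro i hi2 him hcon
  have hnew := hslice (i+1) (by omega) him
  have hs := hsep i hi2 him
  have h0 : 0 < i := by omega
  simp only [slicesHull, inHullX, inHullY, aboveAll, belowAll, rightOfAll, leftOfAll,
    separatesNext] at hnew hs hcon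
  rcases hs with H | H | H | H
  · -- p(i+1) right of hull, left of p i (x)
    rcases hcon with ⟨⟨-, j, hj, hx⟩, -⟩ | ⟨⟨⟨ja, hja, hya⟩, jb, hjb, hyb⟩, -⟩
    · linarith [(H j hj).1]
    · rcases hnew with ⟨-, hv | hv⟩ | ⟨-, hv | hv⟩
      · linarith [hv jb (by omega)]
      · linarith [hv ja (by omega)]
      · linarith [hv i (by omega), (H 0 h0).2]
      · linarith [hv 0 (by omega), (H 0 h0).1]
  · -- p(i+1) left of hull, right of p i (x)
    rcases hcon with ⟨⟨⟨j, hj, hx⟩, -⟩, -⟩ | ⟨⟨⟨ja, hja, hya⟩, jb, hjb, hyb⟩, -⟩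
    · linarith [(H j hj).2]
    · rcases hnew with ⟨-, hv | hv⟩ | ⟨-, hv | hv⟩
      · linarith [hv jb (by omega)]
      · linarith [hv ja (by omega)]
      · linarith [hv 0 (by omega), (H 0 h0).2]
      · linarith [hv i (by omega), (H 0 h0).1]
  · -- p(i+1) above hull, below p i (y)
    rcases hcon with ⟨⟨⟨ja, hja, hxa⟩, jb, hjb, hxb⟩, -⟩ | ⟨⟨-, j, hj, hy⟩, -⟩
    · rcases hnew with ⟨-, hv | hv⟩ | ⟨-, hv | hv⟩
      · linarith [hv i (by omega), (H 0 h0).2]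
      · linarith [hv 0 (by omega), (H 0 h0).1]
      · linarith [hv jb (by omega)]
      · linarith [hv ja (by omega)]
    · linarith [(H j hj).1]
  · -- p(i+1) below hull, above p i (y)
    rcases hcon with ⟨⟨⟨ja, hja, hxa⟩, jb, hjb, hxb⟩, -⟩ | ⟨⟨⟨j, hj, hy⟩, -⟩, -⟩
    · rcases hnew with ⟨-, hv | hv⟩ | ⟨-, hv | hv⟩
      · linarith [hv 0 (by omega), (H 0 h0).2]
      · linarith [hv i (by omega), (H 0 h0).1]
      · linarith [hv jb (by omega)]
      · linarith [hv ja (by omega)]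
    · linarith [(H j hj).2]
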